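/- Let n ≥ 1 be an integer, q > n and σ > 0. Let f(x) = (1+|x|²)^{−q/2}, which belongs to L¹(ℝⁿ), and let 𝓕f(ξ) = (2π)^{−n/2} ∫_{ℝⁿ} e^{−i x·ξ} f(x) dx denote its Fourier transform. Then the function ξ ↦ |ξ|^{2σ} 𝓕f(ξ) is integrable on ℝⁿ and (2π)^{−n/2} ∫_{ℝⁿ} |ξ|^{2σ} 𝓕f(ξ) dξ = 2^{2σ} · Γ(σ + n/2)/Γ(n/2) · Γ(σ + q/2)/Γ(q/2), where Γ denotes the Gamma function. In particular this quantity, which equals the value of the fractional Laplacian (−Δ)^σ ⟨·⟩^{−q} at the origin, is strictly positive. -/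

import Mathlib

open MeasureTheory

/-- The Fourier transform `𝓕f(ξ) = (2π)^{-n/2} ∫ e^{-i x·ξ} f(x) dx` of `f : ℝⁿ → ℝ`. -/
noncomputable def fourierTransf {n : ℕ} (f : EuclideanSpace ℝ (Fin n) → ℝ)
    (ξ : EuclideanSpace ℝ (Fin n)) : ℂ :=
  ((2 * Real.pi) ^ (-(n : ℝ) / 2) : ℝ) •
    ∫ x : EuclideanSpace ℝ (Fin n),
      Complex.exp (-Complex.I * ((inner ℝ x ξ : ℝ) : ℂ)) * ((f x : ℝ) : ℂ)

/-!
Subordination writes `⟨x⟩^{-q} = Γ(q/2)⁻¹ ∫₀^∞ t^{q/2-1} e^{-t} e^{-t|x|²} dt`; exchanging this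
integral with the Fourier integral and using the Gaussian Fourier transform expresses `𝓕⟨·⟩^{-q}(ξ)`
as an integral over `t` of Gaussians `e^{-|ξ|²/4t}` (a Bessel `K` function). Integrating
`|ξ|^{2σ}` against these Gaussians in polar coordinates gives `(4t)^{σ+n/2}` times Gamma factors,
and a second exchange of integrals leaves the Gamma integral `∫₀^∞ t^{σ+q/2-1} e^{-t} dt`.
-/

open Real Set Filter Module
open scoped Complex InnerProductSpace

lemma integrableOn_rpow_mul_exp_neg_Ioi {s : ℝ} (hs : -1 < s) :
    IntegrableOn (fun t : ℝ => t ^ s * rexp (-t)) (Ioi 0) := by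
  simpa [mul_comm] using GammaIntegral_convergent (s := s + 1) (by linarith)

lemma integral_rpow_mul_exp_neg_Ioi {s : ℝ} (hs : -1 < s) :
    ∫ t in Ioi (0 : ℝ), t ^ s * rexp (-t) = Gamma (s + 1) := by
  simp [Gamma_eq_integral (show 0 < s + 1 by linarith), mul_comm]

lemma pow_sub_one_smul_rpow_mul {d : ℕ} (hd : 1 ≤ d) {y : ℝ} (hy : 0 < y) (p c : ℝ) :
    y ^ (d - 1) • (y ^ p * c) = y ^ (p + d - 1) * c := by
  rw [smul_eq_mul, ← mul_assoc, ← rpow_natCast, ← rpow_add hy, Nat.cast_sub hd]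
  ring_nf

lemma rpow_mul_div_rpow {a b c t : ℝ} (hc : 0 ≤ c) (ht : 0 < t) :
    t ^ a * (c / t) ^ b = c ^ b * t ^ (a - b) := by
  rw [div_rpow hc ht.le, rpow_sub ht]
  ring

/-- `∫₀^∞ t^{s-1} e^{-t} e^{-r²/4t} dt`, which equals `2 (r/2)^s K_s(r)` for the modified Bessel
function `K_s`. -/
noncomputable def besselKIntegral (s r : ℝ) : ℝ :=
  ∫ t in Ioi (0 : ℝ), t ^ (s - 1) * rexp (-t) * rexp (-(r ^ 2 / (4 * t)))

section InnerProductSpace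

variable {V : Type*} [NormedAddCommGroup V] [InnerProductSpace ℝ V]

/-- The integrand, in `(t, x)`, of the subordination formula for the Fourier transform of
`⟨x⟩^{-q}`. -/
noncomputable def fourierSubordinand (q : ℝ) (ξ : V) (z : ℝ × V) : ℂ :=
  ((z.1 ^ (q / 2 - 1) * rexp (-z.1) : ℝ) : ℂ) *
    Complex.exp (-z.1 * ‖z.2‖ ^ 2 + -Complex.I * ⟪ξ, z.2⟫_ℝ)

open Complex in
lemma norm_fourierSubordinand (q : ℝ) (ξ : V) {t : ℝ} (ht : 0 < t) (x : V) :
    ‖fourierSubordinand q ξ (t, x)‖ = t ^ (q / 2 - 1) * rexp (-t) * rexp (-t * ‖x‖ ^ 2) := by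
  simp only [fourierSubordinand, norm_mul, norm_real, norm_exp, Real.norm_eq_abs,
    abs_of_nonneg (rpow_nonneg ht.le _), abs_of_nonneg (exp_pos _).le]
  congr 2
  rw [← ofReal_pow, ← ofReal_neg, ← ofReal_mul, add_re, ofReal_re]
  simp

open Complex in
lemma integral_fourierSubordinand_Ioi {q : ℝ} (hq : 0 < q) (ξ x : V) :
    ∫ t in Ioi (0 : ℝ), fourierSubordinand q ξ (t, x) =
      Real.Gamma (q / 2) * (cexp (-I * ⟪x, ξ⟫_ℝ) * (((1 + ‖x‖ ^ 2) ^ (-q / 2) : ℝ) : ℂ)) := by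
  have hsub : ∀ t, fourierSubordinand q ξ (t, x) = cexp (-I * ⟪x, ξ⟫_ℝ) *
      ((t ^ (q / 2 - 1) * rexp (-((1 + ‖x‖ ^ 2) * t)) : ℝ) : ℂ) := by
    intro t
    simp only [fourierSubordinand, ofReal_mul, ofReal_exp]
    rw [real_inner_comm, mul_assoc, ← Complex.exp_add, mul_left_comm, ← Complex.exp_add]
    push_cast
    ring_nf
  simp only [hsub, integral_const_mul]
  rw [integral_complex_ofReal, integral_rpow_mul_exp_neg_mul_Ioi (by positivity) (by positivity),
    one_div, inv_rpow (by positivity), ← rpow_neg (by positivity), neg_div]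
  push_cast
  ring

variable [FiniteDimensional ℝ V] [MeasurableSpace V] [BorelSpace V]

open Complex in
lemma integral_cexp_neg_mul_sq_norm_add_neg_I_mul_inner {t : ℝ} (ht : 0 < t) (ξ : V) :
    ∫ x : V, cexp (-t * ‖x‖ ^ 2 + -I * ⟪ξ, x⟫_ℝ) =
      ((π / t) ^ (finrank ℝ V / 2 : ℝ) * rexp (-(‖ξ‖ ^ 2 / (4 * t))) : ℝ) := by
  rw [GaussianFourier.integral_cexp_neg_mul_sq_norm_add (by simpa using ht), ofReal_mul,
    ofReal_cpow (div_pos pi_pos ht).le, ofReal_exp, neg_sq, I_sq]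
  push_cast
  ring_nf

lemma integral_fourierSubordinand (q : ℝ) (ξ : V) {t : ℝ} (ht : 0 < t) :
    ∫ x, fourierSubordinand q ξ (t, x) =
      ((π ^ (finrank ℝ V / 2 : ℝ) * (t ^ ((q - finrank ℝ V) / 2 - 1) * rexp (-t) *
        rexp (-(‖ξ‖ ^ 2 / (4 * t)))) : ℝ) : ℂ) := by
  simp only [fourierSubordinand]
  rw [integral_const_mul, integral_cexp_neg_mul_sq_norm_add_neg_I_mul_inner ht,
    ← Complex.ofReal_mul, show (q - finrank ℝ V) / 2 - 1 = q / 2 - 1 - finrank ℝ V / 2 by ring]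
  congr 1
  linear_combination (rexp (-t) * rexp (-(‖ξ‖ ^ 2 / (4 * t)))) *
    rpow_mul_div_rpow (a := q / 2 - 1) (b := finrank ℝ V / 2) pi_nonneg ht

lemma integrable_fourierSubordinand {q : ℝ} (hq : (finrank ℝ V : ℝ) < q) (ξ : V) :
    Integrable (fourierSubordinand q ξ) ((volume.restrict (Ioi 0)).prod volume) := by
  rw [integrable_prod_iff (by unfold fourierSubordinand; fun_prop)]
  constructor
  · filter_upwards [ae_restrict_mem measurableSet_Ioi] with t (ht : 0 < t)
    simp only [fourierSubordinand]
    exact (GaussianFourier.integrable_cexp_neg_mul_sq_norm_add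
      (show 0 < (t : ℂ).re by simpa using ht) (-Complex.I) ξ).const_mul _
  · refine IntegrableOn.congr_fun ((integrableOn_rpow_mul_exp_neg_Ioi
      (s := (q - finrank ℝ V) / 2 - 1) (by linarith)).const_mul (π ^ (finrank ℝ V / 2 : ℝ)))
      (fun t (ht : 0 < t) => ?_) measurableSet_Ioi
    simp only [norm_fourierSubordinand q ξ ht, integral_const_mul,
      GaussianFourier.integral_rexp_neg_mul_sq_norm ht]
    rw [show (q - finrank ℝ V) / 2 - 1 = q / 2 - 1 - finrank ℝ V / 2 by ring]
    linear_combination (-rexp (-t)) *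
      rpow_mul_div_rpow (a := q / 2 - 1) (b := finrank ℝ V / 2) pi_nonneg ht

open Complex in
theorem integral_cexp_neg_I_mul_inner_mul_one_add_norm_sq_rpow {q : ℝ}
    (hq : (finrank ℝ V : ℝ) < q) (ξ : V) :
    ∫ x : V, cexp (-I * ⟪x, ξ⟫_ℝ) * (((1 + ‖x‖ ^ 2) ^ (-q / 2) : ℝ) : ℂ) =
      ((π ^ (finrank ℝ V / 2 : ℝ) / Real.Gamma (q / 2) *
        besselKIntegral ((q - finrank ℝ V) / 2) ‖ξ‖ : ℝ) : ℂ) := by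
  have hq0 : 0 < q := by linarith [(Nat.cast_nonneg (finrank ℝ V) : (0 : ℝ) ≤ _)]
  calc ∫ x : V, cexp (-I * ⟪x, ξ⟫_ℝ) * (((1 + ‖x‖ ^ 2) ^ (-q / 2) : ℝ) : ℂ)
      = (Real.Gamma (q / 2) : ℂ)⁻¹ * ∫ x, ∫ t in Ioi (0 : ℝ), fourierSubordinand q ξ (t, x) := by
        simp only [integral_fourierSubordinand_Ioi hq0, integral_const_mul]
        rw [inv_mul_cancel_left₀ (by exact_mod_cast (Gamma_pos_of_pos (half_pos hq0)).ne')]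
    _ = (Real.Gamma (q / 2) : ℂ)⁻¹ * ∫ t in Ioi (0 : ℝ), ∫ x, fourierSubordinand q ξ (t, x) := by
        rw [(integral_integral_swap (f := fun t x => fourierSubordinand q ξ (t, x))
          (integrable_fourierSubordinand hq ξ)).symm]
    _ = _ := by
        rw [setIntegral_congr_fun measurableSet_Ioi fun t ht => integral_fourierSubordinand q ξ ht,
          integral_complex_ofReal, integral_const_mul, besselKIntegral]
        push_cast
        ring

variable [Nontrivial V]

theorem integrable_norm_rpow_mul_exp_neg_mul_sq {p a : ℝ} (hp : -(finrank ℝ V : ℝ) < p)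
    (ha : 0 < a) : Integrable (fun x : V => ‖x‖ ^ p * rexp (-a * ‖x‖ ^ 2)) := by
  rw [integrable_fun_norm_addHaar (E := V) volume (f := fun y => y ^ p * rexp (-a * y ^ 2))]
  refine (integrableOn_rpow_mul_exp_neg_mul_sq ha (s := p + finrank ℝ V - 1)
    (by linarith)).congr_fun (fun y hy => ?_) measurableSet_Ioi
  exact (pow_sub_one_smul_rpow_mul (finrank_pos (R := ℝ) (M := V)) hy _ _).symm

theorem integral_norm_rpow_mul_exp_neg_mul_sq {p a : ℝ} (hp : -(finrank ℝ V : ℝ) < p)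
    (ha : 0 < a) :
    ∫ x : V, ‖x‖ ^ p * rexp (-a * ‖x‖ ^ 2) = π ^ (finrank ℝ V / 2 : ℝ) *
      (Gamma ((p + finrank ℝ V) / 2) / Gamma (finrank ℝ V / 2)) *
        a ^ (-(p + finrank ℝ V) / 2) := by
  have hd : (0 : ℝ) < finrank ℝ V := Nat.cast_pos.mpr finrank_pos
  have hradial : ∫ y in Ioi (0 : ℝ), y ^ (finrank ℝ V - 1) • (y ^ p * rexp (-a * y ^ 2))
      = a ^ (-(p + finrank ℝ V) / 2) * (1 / 2) * Gamma ((p + finrank ℝ V) / 2) := by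
    rw [setIntegral_congr_fun measurableSet_Ioi fun y hy =>
        pow_sub_one_smul_rpow_mul (finrank_pos (R := ℝ) (M := V)) hy _ _]
    simp_rw [← rpow_two]
    rw [integral_rpow_mul_exp_neg_mul_rpow two_pos (by linarith) ha]
    ring_nf
  have hball : volume.real (Metric.ball (0 : V) 1)
      = π ^ (finrank ℝ V / 2 : ℝ) / Gamma (finrank ℝ V / 2 + 1) := by
    rw [measureReal_def, InnerProductSpace.volume_ball, ENNReal.ofReal_one, one_pow, one_mul,
      ENNReal.toReal_ofReal (by positivity), sqrt_eq_rpow, ← rpow_natCast, ← rpow_mul pi_nonneg]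
    ring_nf
  rw [integral_fun_norm_addHaar volume (fun y => y ^ p * rexp (-a * y ^ 2)), hradial, hball,
    nsmul_eq_mul, smul_eq_mul, Gamma_add_one (by positivity)]
  field_simp

lemma integral_norm_rpow_mul_besselKIntegrand {p s t : ℝ} (hp : -(finrank ℝ V : ℝ) < p)
    (ht : 0 < t) :
    ∫ ξ : V, ‖ξ‖ ^ p * (t ^ (s - 1) * rexp (-t) * rexp (-(‖ξ‖ ^ 2 / (4 * t)))) =
      π ^ (finrank ℝ V / 2 : ℝ) * 2 ^ (p + finrank ℝ V) *
        (Gamma ((p + finrank ℝ V) / 2) / Gamma (finrank ℝ V / 2)) *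
          (t ^ (s + (p + finrank ℝ V) / 2 - 1) * rexp (-t)) := by
  have hexp : ∀ ξ : V, ‖ξ‖ ^ p * (t ^ (s - 1) * rexp (-t) * rexp (-(‖ξ‖ ^ 2 / (4 * t)))) =
      t ^ (s - 1) * rexp (-t) * (‖ξ‖ ^ p * rexp (-(1 / (4 * t)) * ‖ξ‖ ^ 2)) := fun ξ => by
    ring_nf
  have hscale : (1 / (4 * t)) ^ (-(p + finrank ℝ V) / 2) =
      2 ^ (p + finrank ℝ V) * t ^ ((p + finrank ℝ V) / 2) := by
    rw [neg_div, rpow_neg (by positivity), one_div, inv_rpow (by positivity), inv_inv,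
      mul_rpow (by norm_num) ht.le, show (4 : ℝ) = 2 ^ (2 : ℝ) by norm_num,
      ← rpow_mul (by norm_num)]
    ring_nf
  have htpow : t ^ (s + (p + finrank ℝ V) / 2 - 1) = t ^ (s - 1) * t ^ ((p + finrank ℝ V) / 2) := by
    rw [← rpow_add ht]
    ring_nf
  simp only [hexp, integral_const_mul]
  rw [integral_norm_rpow_mul_exp_neg_mul_sq hp (by positivity), hscale, htpow]
  ring

lemma integrable_norm_rpow_mul_besselKIntegrand {p s : ℝ} (hp : -(finrank ℝ V : ℝ) < p)
    (hs : 0 < s + (p + finrank ℝ V) / 2) :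
    Integrable (fun z : V × ℝ => ‖z.1‖ ^ p * (z.2 ^ (s - 1) * rexp (-z.2) *
      rexp (-(‖z.1‖ ^ 2 / (4 * z.2))))) (volume.prod (volume.restrict (Ioi 0))) := by
  rw [integrable_prod_iff' (by fun_prop)]
  constructor
  · filter_upwards [ae_restrict_mem measurableSet_Ioi] with t (ht : 0 < t)
    refine ((integrable_norm_rpow_mul_exp_neg_mul_sq hp (a := 1 / (4 * t)) (by positivity)
      ).const_mul (t ^ (s - 1) * rexp (-t))).congr (Eventually.of_forall fun ξ => ?_)
    ring_nf
  · refine IntegrableOn.congr_fun ((integrableOn_rpow_mul_exp_neg_Ioi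
      (s := s + (p + finrank ℝ V) / 2 - 1) (by linarith)).const_mul
        (π ^ (finrank ℝ V / 2 : ℝ) * 2 ^ (p + finrank ℝ V) *
          (Gamma ((p + finrank ℝ V) / 2) / Gamma (finrank ℝ V / 2)))) (fun t ht => ?_)
      measurableSet_Ioi
    rw [mem_Ioi] at ht
    have hnonneg : ∀ ξ : V,
        0 ≤ ‖ξ‖ ^ p * (t ^ (s - 1) * rexp (-t) * rexp (-(‖ξ‖ ^ 2 / (4 * t)))) :=
      fun ξ => by positivity
    simp only [Real.norm_of_nonneg (hnonneg _)]
    exact (integral_norm_rpow_mul_besselKIntegrand hp ht).symm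

theorem integrable_norm_rpow_mul_besselKIntegral {p s : ℝ} (hp : -(finrank ℝ V : ℝ) < p)
    (hs : 0 < s + (p + finrank ℝ V) / 2) :
    Integrable (fun ξ : V => ‖ξ‖ ^ p * besselKIntegral s ‖ξ‖) := by
  refine (integrable_norm_rpow_mul_besselKIntegrand hp hs).integral_prod_left.congr
    (Eventually.of_forall fun ξ => ?_)
  simp only [besselKIntegral, integral_const_mul]

theorem integral_norm_rpow_mul_besselKIntegral {p s : ℝ} (hp : -(finrank ℝ V : ℝ) < p)
    (hs : 0 < s + (p + finrank ℝ V) / 2) :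
    ∫ ξ : V, ‖ξ‖ ^ p * besselKIntegral s ‖ξ‖ =
      π ^ (finrank ℝ V / 2 : ℝ) * 2 ^ (p + finrank ℝ V) *
        (Gamma ((p + finrank ℝ V) / 2) / Gamma (finrank ℝ V / 2)) *
          Gamma (s + (p + finrank ℝ V) / 2) := by
  simp only [besselKIntegral, ← integral_const_mul]
  rw [integral_integral_swap (integrable_norm_rpow_mul_besselKIntegrand hp hs),
    setIntegral_congr_fun measurableSet_Ioi fun t ht =>
      integral_norm_rpow_mul_besselKIntegrand hp ht,
    integral_const_mul, integral_rpow_mul_exp_neg_Ioi (by linarith), sub_add_cancel]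

end InnerProductSpace

lemma two_mul_pi_rpow_neg_mul_pi_rpow (a : ℝ) : (2 * π) ^ (-a) * π ^ a = 2 ^ (-a) := by
  rw [mul_rpow zero_le_two pi_nonneg, mul_assoc, ← rpow_add pi_pos, neg_add_cancel, rpow_zero,
    mul_one]

theorem fourierTransf_one_add_norm_sq_rpow {n : ℕ} {q : ℝ} (hq : (n : ℝ) < q)
    (ξ : EuclideanSpace ℝ (Fin n)) :
    fourierTransf (fun x : EuclideanSpace ℝ (Fin n) => (1 + ‖x‖ ^ 2) ^ (-q / 2)) ξ =
      ((2 ^ (-(n : ℝ) / 2) / Gamma (q / 2) * besselKIntegral ((q - n) / 2) ‖ξ‖ : ℝ) : ℂ) := by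
  rw [fourierTransf, integral_cexp_neg_I_mul_inner_mul_one_add_norm_sq_rpow (by simpa using hq),
    finrank_euclideanSpace_fin, Complex.real_smul, ← Complex.ofReal_mul, neg_div,
    ← two_mul_pi_rpow_neg_mul_pi_rpow]
  ring_nf

theorem stmt6 (n : ℕ) (hn : 1 ≤ n) (q : ℝ) (hq : (n : ℝ) < q) (σ : ℝ) (hσ : 0 < σ) :
    Integrable (fun x : EuclideanSpace ℝ (Fin n) => (1 + ‖x‖ ^ 2) ^ (-q / 2)) ∧
    Integrable (fun ξ : EuclideanSpace ℝ (Fin n) =>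
      (‖ξ‖ ^ (2 * σ) : ℝ) •
        fourierTransf (fun x : EuclideanSpace ℝ (Fin n) => (1 + ‖x‖ ^ 2) ^ (-q / 2)) ξ) ∧
    ((2 * Real.pi) ^ (-(n : ℝ) / 2) : ℝ) •
        (∫ ξ : EuclideanSpace ℝ (Fin n),
          (‖ξ‖ ^ (2 * σ) : ℝ) •
            fourierTransf (fun x : EuclideanSpace ℝ (Fin n) => (1 + ‖x‖ ^ 2) ^ (-q / 2)) ξ)
      = (((2 : ℝ) ^ (2 * σ) * (Real.Gamma (σ + n / 2) / Real.Gamma (n / 2)) *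
          (Real.Gamma (σ + q / 2) / Real.Gamma (q / 2)) : ℝ) : ℂ) ∧
    0 < (2 : ℝ) ^ (2 * σ) * (Real.Gamma (σ + n / 2) / Real.Gamma (n / 2)) *
          (Real.Gamma (σ + q / 2) / Real.Gamma (q / 2)) := by
  have : Nonempty (Fin n) := Fin.pos_iff_nonempty.mp hn
  have hn0 : (0 : ℝ) < n := by exact_mod_cast hn
  have hq0 : 0 < q := by linarith
  have hdim : finrank ℝ (EuclideanSpace ℝ (Fin n)) = n := finrank_euclideanSpace_fin
  have hp : -(finrank ℝ (EuclideanSpace ℝ (Fin n)) : ℝ) < 2 * σ := by rw [hdim]; linarith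
  have hs : 0 < (q - n) / 2 + (2 * σ + finrank ℝ (EuclideanSpace ℝ (Fin n))) / 2 := by
    rw [hdim]; linarith
  have hFT : ∀ ξ : EuclideanSpace ℝ (Fin n), (‖ξ‖ ^ (2 * σ) : ℝ) •
      fourierTransf (fun x : EuclideanSpace ℝ (Fin n) => (1 + ‖x‖ ^ 2) ^ (-q / 2)) ξ =
        ((2 ^ (-(n : ℝ) / 2) / Gamma (q / 2) *
          (‖ξ‖ ^ (2 * σ) * besselKIntegral ((q - n) / 2) ‖ξ‖) : ℝ) : ℂ) := fun ξ => by
    rw [fourierTransf_one_add_norm_sq_rpow hq, Complex.real_smul, ← Complex.ofReal_mul]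
    ring_nf
  refine ⟨integrable_rpow_neg_one_add_norm_sq (by rwa [hdim]), ?_, ?_, by positivity⟩
  · simp_rw [hFT]
    exact ((integrable_norm_rpow_mul_besselKIntegral hp hs).const_mul _).ofReal
  · simp_rw [hFT]
    rw [integral_complex_ofReal, integral_const_mul, integral_norm_rpow_mul_besselKIntegral hp hs,
      hdim, Complex.real_smul, ← Complex.ofReal_mul,
      show (q - n) / 2 + (2 * σ + n) / 2 = σ + q / 2 by ring,
      show (2 * σ + n) / 2 = σ + n / 2 by ring]
    congr 1
    have hpi := two_mul_pi_rpow_neg_mul_pi_rpow ((n : ℝ) / 2)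
    rw [← neg_div] at hpi
    have hpow_two : (2 : ℝ) ^ (-(n : ℝ) / 2) * 2 ^ (-(n : ℝ) / 2) * 2 ^ (2 * σ + n) =
        2 ^ (2 * σ) := by
      rw [← rpow_add two_pos, ← rpow_add two_pos]
      ring_nf
    linear_combination (Gamma (σ + n / 2) / Gamma (n / 2) * (Gamma (σ + q / 2) / Gamma (q / 2))) *
      (hpow_two + 2 ^ (-(n : ℝ) / 2) * 2 ^ (2 * σ + n) * hpi)
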